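/- arXiv:1312.3797 — 2 statements merged into one kernel-verified Lean document; each statement's English description precedes it below -/
import Mathlib

section
/- The map h : Σ^ω → (Σ ∪ {0,A})^ω defined by inserting blocks of zeros of increasing length and markers A before odd-positioned letters is a homeomorphism onto its image, and its image h(Σ^ω) is a closed subset of (Σ ∪ {0,A})^ω. -/
/-- Cumulative concatenation of the first `n` blocks. -/
def cumCat {C : Type*} (b : ℕ → List C) : ℕ → List C
  | 0 => []
  | n + 1 => cumCat b n ++ b n

/-- The infinite word obtained by concatenating the (nonempty) blocks `b 0, b 1, …`. -/
def infCat {C : Type*} (b : ℕ → List C) (d : C) : ℕ → C :=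
  fun i => (cumCat b (i + 1)).getD i d

/-- In the alphabet `Σ ∪ {0, A}`, the letter `0` is `Sum.inr 0` and the letter `A`
is `Sum.inr 1`. The `(n+1)`-st block of `h(x)` is `0^{n+1}` followed by the marker `A`
when `n+1` is odd, followed by the letter `x(n+1)` (0-indexed: `x n`). -/
def hBlock {α : Type*} (x : ℕ → α) (n : ℕ) : List (α ⊕ Fin 2) :=
  List.replicate (n + 1) (Sum.inr 0) ++ (if n % 2 = 0 then [Sum.inr 1] else []) ++ [Sum.inl (x n)]

/-- The coding `h : Σ^ω → (Σ ∪ {0,A})^ω`,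
`h(x) = 0·A·x(1)·0²·x(2)·0³·A·x(3)·0⁴·x(4)⋯`. -/
def codeH {α : Type*} (x : ℕ → α) : ℕ → α ⊕ Fin 2 :=
  infCat (hBlock x) (Sum.inr 0)

/-!
The letter `h(x)(i)` only depends on `x(0), …, x(i)`, so `h` is continuous; and `x(n)` is the
last letter of the `n`-th block, whose position does not depend on `x`, so `h` is injective.
Since `Σ` is finite, `Σ^ω` is compact, and a continuous injection of a compact space into a
Hausdorff space is a closed embedding.
-/

lemma List.IsPrefix.getD_eq {C : Type*} {l₁ l₂ : List C} (h : l₁ <+: l₂) {i : ℕ}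
    (hi : i < l₁.length) (d : C) : l₁.getD i d = l₂.getD i d := by
  rw [List.getD_eq_getElem _ _ hi, List.getD_eq_getElem _ _ (hi.trans_le h.length_le),
    h.getElem hi]

section Concatenation

variable {C : Type*} {b b' : ℕ → List C}

lemma cumCat_prefix_cumCat {m n : ℕ} (h : m ≤ n) : cumCat b m <+: cumCat b n := by
  induction n, h using Nat.le_induction with
  | base => exact List.prefix_refl _
  | succ n _ ih => exact ih.trans (List.prefix_append _ _)

lemma le_length_cumCat (hb : ∀ k, b k ≠ []) (n : ℕ) : n ≤ (cumCat b n).length := by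
  induction n with
  | zero => exact Nat.zero_le _
  | succ n ih =>
    have := List.length_pos_iff.mpr (hb n)
    simp only [cumCat, List.length_append]
    omega

lemma cumCat_congr {n : ℕ} (h : ∀ k < n, b k = b' k) : cumCat b n = cumCat b' n := by
  induction n with
  | zero => rfl
  | succ n ih =>
    rw [cumCat, cumCat, ih fun k hk => h k (hk.trans n.lt_succ_self), h n n.lt_succ_self]

lemma length_cumCat_congr (h : ∀ k, (b k).length = (b' k).length) (n : ℕ) :
    (cumCat b n).length = (cumCat b' n).length := by
  induction n with
  | zero => rfl
  | succ n ih => simp only [cumCat, List.length_append, ih, h]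

lemma infCat_congr {d : C} {i : ℕ} (h : ∀ k ≤ i, b k = b' k) :
    infCat b d i = infCat b' d i := by
  rw [infCat, infCat, cumCat_congr fun k hk => h k (Nat.lt_succ_iff.mp hk)]

lemma infCat_eq_getD (hb : ∀ k, b k ≠ []) (d : C) {i n : ℕ}
    (hi : i < (cumCat b n).length) : infCat b d i = (cumCat b n).getD i d := by
  have hi' : i < (cumCat b (i + 1)).length := i.lt_succ_self.trans_le (le_length_cumCat hb _)
  rcases le_total (i + 1) n with h | h
  · exact (cumCat_prefix_cumCat h).getD_eq hi' d
  · exact ((cumCat_prefix_cumCat h).getD_eq hi d).symm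

lemma infCat_length_cumCat_sub_one (hb : ∀ k, b k ≠ []) (d : C) (n : ℕ) :
    infCat b d ((cumCat b (n + 1)).length - 1) = (b n).getLast (hb n) := by
  have hne : cumCat b (n + 1) ≠ [] := by simp [cumCat, hb n]
  have hlt := Nat.sub_one_lt (List.length_pos_iff.mpr hne).ne'
  rw [infCat_eq_getD hb d hlt, List.getD_eq_getElem _ _ hlt, ← List.getLast_eq_getElem hne]
  exact List.getLast_append_of_ne_nil _ (hb n)

end Concatenation

lemma continuous_of_determined_by_prefix {α β : Type*} [TopologicalSpace α]
    [DiscreteTopology α] [TopologicalSpace β] {f : (ℕ → α) → β}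
    (hf : ∀ x, ∃ n, ∀ y : ℕ → α, (∀ k < n, y k = x k) → f y = f x) : Continuous f := by
  refine IsLocallyConstant.continuous <| (IsLocallyConstant.iff_exists_open f).mpr fun x => ?_
  obtain ⟨n, hn⟩ := hf x
  exact ⟨(Set.Iio n).pi fun k => {x k}, isOpen_set_pi (Set.finite_Iio n)
    (fun _ _ => isOpen_discrete _), fun _ _ => rfl, fun y hy => hn y hy⟩

section Coding

variable {α : Type*}

lemma hBlock_ne_nil (x : ℕ → α) (n : ℕ) : hBlock x n ≠ [] := by
  simp [hBlock]

lemma length_hBlock (x y : ℕ → α) (n : ℕ) : (hBlock x n).length = (hBlock y n).length := by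
  simp [hBlock]

lemma codeH_length_cumCat_sub_one (x : ℕ → α) (n : ℕ) :
    codeH x ((cumCat (hBlock x) (n + 1)).length - 1) = Sum.inl (x n) := by
  rw [codeH, infCat_length_cumCat_sub_one (hBlock_ne_nil x)]
  simp [hBlock]

lemma codeH_injective : Function.Injective (codeH (α := α)) := by
  intro x y hxy
  funext n
  have hy := codeH_length_cumCat_sub_one y n
  rw [← length_cumCat_congr (length_hBlock x y)] at hy
  exact Sum.inl.inj <| (codeH_length_cumCat_sub_one x n).symm.trans ((congrFun hxy _).trans hy)

lemma continuous_codeH [TopologicalSpace α] [DiscreteTopology α] :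
    Continuous (codeH (α := α)) :=
  continuous_pi fun i => continuous_of_determined_by_prefix fun x =>
    ⟨i + 1, fun y hy => infCat_congr fun k hk => by
      rw [hBlock, hBlock, hy k (Nat.lt_succ_of_le hk)]⟩

end Coding

/-- The map `h` is a homeomorphism onto its image (i.e. a topological embedding),
and its image `h(Σ^ω)` is a closed subset of `(Σ ∪ {0,A})^ω`. -/
theorem codeH_embedding_isClosed_range {α : Type*} [Fintype α]
    [TopologicalSpace α] [DiscreteTopology α] :
    Topology.IsEmbedding (codeH (α := α)) ∧ IsClosed (Set.range (codeH (α := α))) := by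
  have h := continuous_codeH.isClosedEmbedding (codeH_injective (α := α))
  exact ⟨h.isEmbedding, h.isClosed_range⟩
end

section
/- Let L ⊆ ω^ω and let L' ⊆ {0,1}^ω be defined as L' = φ(L) ∪ D₂ ∪ D₃ ∪ D₄ (with φ, D₂, D₃, D₄ as below). Then Player 1 has a winning strategy in the Gale-Stewart game G(L) over alphabet ω if and only if Player 1 has a winning strategy in G(L') over alphabet {0,1}, and similarly for Player 2. In particular G(L) is determined iff G(L') is determined. -/
/-- The history (list of moves) of the first `n` letters of the play `x`. -/
def histOf {X : Type*} (x : ℕ → X) (n : ℕ) : List X := List.ofFn fun i : Fin n => x i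

/-- Player 1 follows strategy `σ` in the play `x`: Player 1 plays the letters at
(0-indexed) even positions, each determined by `σ` from the preceding moves. -/
def P1Follows {X : Type*} (σ : List X → X) (x : ℕ → X) : Prop :=
  ∀ n, x (2 * n) = σ (histOf x (2 * n))

/-- Player 2 follows strategy `τ` in the play `x`: Player 2 plays the letters at
(0-indexed) odd positions, each determined by `τ` from the preceding moves. -/
def P2Follows {X : Type*} (τ : List X → X) (x : ℕ → X) : Prop :=
  ∀ n, x (2 * n + 1) = τ (histOf x (2 * n + 1))

/-- `σ` is a winning strategy for Player 1 in the Gale-Stewart game `G A`. -/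
def P1Winning {X : Type*} (A : Set (ℕ → X)) (σ : List X → X) : Prop :=
  ∀ x, P1Follows σ x → x ∈ A

/-- `τ` is a winning strategy for Player 2 in the Gale-Stewart game `G A`. -/
def P2Winning {X : Type*} (A : Set (ℕ → X)) (τ : List X → X) : Prop :=
  ∀ x, P2Follows τ x → x ∉ A

/-- The Gale-Stewart game `G A` is determined: one of the two players has a
winning strategy. -/
def GSDetermined {X : Type*} (A : Set (ℕ → X)) : Prop :=
  (∃ σ, P1Winning A σ) ∨ (∃ τ, P2Winning A τ)

/-- The binary block `(11)^k·0` (with `1 = true`, `0 = false`). -/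
def goodBlock (k : ℕ) : List Bool := List.replicate (2 * k) true ++ [false]

/-- The coding `φ : ω^ω → {0,1}^ω`, `φ((n_i)) = (11)^{n_1+1}·0·(11)^{n_2+1}·0⋯`. -/
def phiCode (x : ℕ → ℕ) : ℕ → Bool :=
  infCat (fun n => goodBlock (x n + 1)) false

/-- `w` is a finite prefix of the infinite word `y`. -/
def listPrefixOf (w : List Bool) (y : ℕ → Bool) : Prop :=
  ∀ i, i < w.length → w.getD i false = y i

/-- `isBlocksCat n w` : the finite word `w` is a concatenation of `n` blocks of the
form `(11)^k·0` with `k ≥ 1`, i.e. `w ∈ [(11)^+·0]^n`. -/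
def isBlocksCat : ℕ → List Bool → Prop
  | 0, w => w = []
  | n + 1, w => ∃ k ≥ 1, ∃ w', w = goodBlock k ++ w' ∧ isBlocksCat n w'

/-- `D₂ = {y : ∃ n,k ≥ 0, y ∈ [(11)^+0]^{2n}·1^{2k+1}·0·{0,1}^ω}`. -/
def Dtwo : Set (ℕ → Bool) :=
  {y | ∃ n k w, isBlocksCat (2 * n) w ∧
        listPrefixOf (w ++ List.replicate (2 * k + 1) true ++ [false]) y}

/-- `D₃ = {y : ∃ n ≥ 0, y ∈ [(11)^+0]^{2n+1}·1^ω}`. -/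
def Dthree : Set (ℕ → Bool) :=
  {y | ∃ n w, isBlocksCat (2 * n + 1) w ∧ listPrefixOf w y ∧ ∀ i ≥ w.length, y i = true}

/-- `D₄ = {y : ∃ n ≥ 0, y ∈ [(11)^+0]^{2n+1}·0·{0,1}^ω}`. -/
def Dfour : Set (ℕ → Bool) :=
  {y | ∃ n w, isBlocksCat (2 * n + 1) w ∧ listPrefixOf (w ++ [false]) y}

/-!
A binary word is read block by block (`parse`): either it decodes to a sequence of integers,
or its first deviation from the format `(11)^+0` is blamed on one player, namely the one
who writes a misplaced `0`, or the one who never closes a block it owns. `L'` consists of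
`φ(L)` and the words whose blame falls on Player 2, so in `G(L')` deviating loses.
A strategy in `G(L)` is played in `G(L')` by answering the move `n` with `2n+2` ones and a
`0`. Conversely, a binary strategy is turned into a strategy in `G(L)` by letting it write
its block against an opponent who only writes ones: if this ever fails to produce a
well-formed block, the binary strategy loses some play by deviating; otherwise the coded
play is `φ` of the integer play.
-/

section Histories

variable {X : Type*}

@[simp] lemma histOf_length (x : ℕ → X) (n : ℕ) : (histOf x n).length = n := by
  simp [histOf]

@[simp] lemma getElem_histOf (x : ℕ → X) {n i : ℕ} (hi : i < (histOf x n).length) :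
    (histOf x n)[i] = x i := by
  simp [histOf]

@[simp] lemma getElem?_histOf (x : ℕ → X) (n i : ℕ) :
    (histOf x n)[i]? = if i < n then some (x i) else none := by
  simp [histOf, List.getElem?_ofFn]

lemma histOf_succ (x : ℕ → X) (n : ℕ) : histOf x (n + 1) = histOf x n ++ [x n] := by
  simp only [histOf, List.ofFn_succ_last, Fin.val_castSucc, Fin.val_last]

lemma take_histOf (x : ℕ → X) {m n : ℕ} (h : m ≤ n) : (histOf x n).take m = histOf x m :=
  List.ext_getElem (by simp [h]) fun i h₁ h₂ => by simp

lemma histOf_prefix (x : ℕ → X) {m n : ℕ} (h : m ≤ n) : histOf x m <+: histOf x n :=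
  take_histOf x h ▸ List.take_prefix _ _

lemma histOf_length_eq_of_eq_append {x : ℕ → X} {n : ℕ} {u v : List X}
    (h : histOf x n = u ++ v) : histOf x u.length = u := by
  have hn : n = u.length + v.length := by simpa using congrArg List.length h
  rw [← take_histOf x (by omega : u.length ≤ n), h, List.take_left]

lemma apply_length_eq_of_histOf_eq {x : ℕ → X} {n : ℕ} {u v : List X} {b : X}
    (h : histOf x n = u ++ b :: v) : x u.length = b := by
  have hn : n = u.length + (v.length + 1) := by simpa using congrArg List.length h
  simpa [hn] using congrArg (·[u.length]?) h

lemma apply_eq_of_histOf_eq {x x' : ℕ → X} {n i : ℕ} (h : histOf x n = histOf x' n)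
    (hi : i < n) : x i = x' i := by
  simpa [hi] using congrArg (·[i]?) h

end Histories

section Strategies

variable {X : Type*}

/-- Players are numbered `0` (Player 1, at even positions) and `1` (Player 2). -/
def Follows (p : ℕ) (s : List X → X) (x : ℕ → X) : Prop :=
  ∀ n, n % 2 = p → x n = s (histOf x n)

def Wins (p : ℕ) (A : Set (ℕ → X)) (s : List X → X) : Prop :=
  ∀ x, Follows p s x → (x ∈ A ↔ p = 0)

lemma p1Winning_iff_wins_zero (A : Set (ℕ → X)) (σ : List X → X) :
    P1Winning A σ ↔ Wins 0 A σ := by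
  have : ∀ x, P1Follows σ x ↔ Follows 0 σ x := fun x =>
    ⟨fun h n hn => by simpa [Nat.mul_div_cancel' (Nat.dvd_of_mod_eq_zero hn)] using h (n / 2),
     fun h n => h (2 * n) (by omega)⟩
  simp [P1Winning, Wins, this]

lemma p2Winning_iff_wins_one (A : Set (ℕ → X)) (τ : List X → X) :
    P2Winning A τ ↔ Wins 1 A τ := by
  have : ∀ x, P2Follows τ x ↔ Follows 1 τ x := fun x =>
    ⟨fun h n hn => by simpa [show 2 * (n / 2) + 1 = n by omega] using h (n / 2),
     fun h n => h (2 * n + 1) (by omega)⟩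
  simp [P2Winning, Wins, this]

def Consistent (p : ℕ) (s : List X → X) (u : List X) : Prop :=
  ∀ i (hi : i < u.length), i % 2 = p → u[i] = s (u.take i)

lemma consistent_histOf {p : ℕ} {s : List X → X} {x : ℕ → X} {n : ℕ} :
    Consistent p s (histOf x n) ↔ ∀ i < n, i % 2 = p → x i = s (histOf x i) := by
  simp +contextual [Consistent, take_histOf, le_of_lt]

lemma Follows.of_consistent {p : ℕ} {s : List X → X} {x : ℕ → X}
    (h : ∀ n, ∃ N ≥ n, Consistent p s (histOf x N)) : Follows p s x := fun n hn => by
  obtain ⟨N, hN, hc⟩ := h (n + 1)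
  exact consistent_histOf.1 hc n (by omega) hn

lemma consistent_append_singleton {p : ℕ} {s : List X → X} {u : List X} {a : X} :
    Consistent p s (u ++ [a]) ↔ Consistent p s u ∧ (u.length % 2 = p → a = s u) := by
  simp only [Consistent, List.length_append, List.length_singleton]
  constructor
  · intro h
    refine ⟨fun i hi hp => ?_, fun hp => by simpa using h u.length (by omega) hp⟩
    simpa [List.getElem_append_left hi, List.take_append_of_le_length hi.le] using
      h i (by omega) hp
  · rintro ⟨h, ha⟩ i hi hp
    rcases Nat.lt_or_ge i u.length with hi' | hi'
    · simpa [List.getElem_append_left hi', List.take_append_of_le_length hi'.le] using h i hi' hp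
    · obtain rfl : i = u.length := by omega
      simpa using ha hp

lemma consistent_append_replicate {p : ℕ} {s : List X → X} {u : List X} {a : X} {t : ℕ} :
    Consistent p s (u ++ List.replicate t a) ↔
      Consistent p s u ∧ ∀ k < t, (u.length + k) % 2 = p → a = s (u ++ List.replicate k a) := by
  induction t with
  | zero => simp
  | succ t ih =>
    rw [List.replicate_succ', ← List.append_assoc, consistent_append_singleton, ih,
      Nat.forall_lt_succ_right, and_assoc]
    simp

def extendPlay (s : List X → X) (u : List X) (n : ℕ) : X :=
  if h : n < u.length then u[n] else s (List.ofFn fun i : Fin n => extendPlay s u i)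

lemma Consistent.exists_follows {p : ℕ} {s : List X → X} {u : List X}
    (hu : Consistent p s u) : ∃ x, histOf x u.length = u ∧ Follows p s x := by
  have hx : ∀ n, extendPlay s u n =
      if h : n < u.length then u[n] else s (histOf (extendPlay s u) n) := by
    intro n; rw [extendPlay]; rfl
  have hpre : histOf (extendPlay s u) u.length = u :=
    List.ext_getElem (by simp) fun i h₁ h₂ => by simp [hx i, h₂]
  refine ⟨extendPlay s u, hpre, fun n hn => ?_⟩
  rw [hx n]
  split_ifs with h
  · rw [hu n h hn, ← take_histOf (extendPlay s u) h.le, hpre]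
  · rfl

end Strategies

def encode (l : List ℕ) : List Bool := l.flatMap fun a => goodBlock (a + 1)

@[simp] lemma encode_nil : encode [] = [] := rfl

lemma encode_append_singleton (l : List ℕ) (a : ℕ) :
    encode (l ++ [a]) = encode l ++ List.replicate (2 * (a + 1)) true ++ [false] := by
  simp [encode, goodBlock]

lemma encode_length_mod_two (l : List ℕ) : (encode l).length % 2 = l.length % 2 := by
  induction l with
  | nil => rfl
  | cons a l ih => simp [encode, goodBlock] at ih ⊢; omega

lemma length_le_encode_length (l : List ℕ) : l.length ≤ (encode l).length := by
  induction l with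
  | nil => rfl
  | cons a l ih => simp [encode, goodBlock] at ih ⊢; omega

lemma isBlocksCat_iff {n : ℕ} {w : List Bool} :
    isBlocksCat n w ↔ ∃ l : List ℕ, l.length = n ∧ w = encode l := by
  induction n generalizing w with
  | zero => simp [isBlocksCat]
  | succ n ih =>
    simp only [isBlocksCat, ih]
    constructor
    · rintro ⟨k, hk, w', rfl, l, rfl, rfl⟩
      exact ⟨(k - 1) :: l, rfl, by simp [encode, Nat.sub_add_cancel hk]⟩
    · rintro ⟨_ | ⟨a, l⟩, hl, rfl⟩
      · simp at hl
      · exact ⟨a + 1, by omega, encode l, rfl, l, by simpa using hl, rfl⟩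

def padOnes (w : List Bool) (i : ℕ) : Bool := w.getD i true

lemma histOf_padOnes (w : List Bool) (t : ℕ) :
    histOf (padOnes w) (w.length + t) = w ++ List.replicate t true :=
  List.ext_getElem (by simp) fun i h₁ h₂ => by
    simp only [getElem_histOf, padOnes, List.getElem_append, List.getElem_replicate]
    split_ifs <;> simp_all

lemma eq_padOnes_iff {w : List Bool} {y : ℕ → Bool} :
    y = padOnes w ↔ listPrefixOf w y ∧ ∀ i ≥ w.length, y i = true := by
  constructor
  · rintro rfl
    exact ⟨fun i hi => by simp [padOnes, hi], fun i hi => by simp [padOnes, hi]⟩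
  · rintro ⟨hw, ht⟩
    funext i
    rcases Nat.lt_or_ge i w.length with hi | hi
    · simp [← hw i hi, padOnes, hi]
    · simp [ht i hi, padOnes, hi]

lemma listPrefixOf_iff {w : List Bool} {y : ℕ → Bool} :
    listPrefixOf w y ↔ histOf y w.length = w := by
  simp only [listPrefixOf, List.ext_getElem_iff, histOf_length, getElem_histOf, true_and]
  exact forall₂_congr fun i hi => by simp [hi, eq_comm]

/-- The state of a left-to-right reader of a binary word: `reading l r` after `encode l`
followed by `r` ones, `fault p` once a `0` has been misplaced. -/
inductive Parse
  | reading (l : List ℕ) (r : ℕ)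
  | fault (p : ℕ)

namespace Parse

/-- A fault is charged to the player who wrote the misplaced `0`: its position
`|encode l| + r` has the parity of `l.length + r`. -/
def step : Parse → Bool → Parse
  | reading l r, true => reading l (r + 1)
  | reading l r, false =>
      if r % 2 = 1 ∨ r = 0 then fault ((l.length + r) % 2) else reading (l ++ [r / 2 - 1]) 0
  | fault p, _ => fault p

/-- The player blamed if the word continues with ones only: the faulty player, or the owner
of the open block. -/
def blame : Parse → ℕ
  | reading l _ => l.length % 2
  | fault p => p

end Parse

open Parse

def parse (w : List Bool) : Parse := w.foldl step (reading [] 0)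

lemma parse_append_singleton (w : List Bool) (b : Bool) :
    parse (w ++ [b]) = (parse w).step b := by
  simp [parse]

lemma foldl_step_fault (p : ℕ) (w : List Bool) : w.foldl step (fault p) = fault p := by
  induction w with
  | nil => rfl
  | cons b w ih => exact ih

lemma foldl_step_replicate (l : List ℕ) (r t : ℕ) :
    (List.replicate t true).foldl step (reading l r) = reading l (r + t) := by
  induction t generalizing r with
  | zero => rfl
  | succ t ih =>
    simp only [List.replicate_succ, List.foldl_cons, step, ih, Nat.add_right_comm, Nat.add_assoc]

lemma foldl_step_encode (l₀ l : List ℕ) :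
    (encode l).foldl step (reading l₀ 0) = reading (l₀ ++ l) 0 := by
  induction l using List.reverseRecOn with
  | nil => simp
  | append_singleton l a ih =>
    simp only [encode_append_singleton, List.foldl_append, ih, foldl_step_replicate,
      List.foldl_cons, List.foldl_nil, step]
    simp [show (2 * (a + 1)) % 2 = 0 by omega]

lemma parse_encode_append_replicate (l : List ℕ) (r : ℕ) :
    parse (encode l ++ List.replicate r true) = reading l r := by
  have h := foldl_step_encode [] l
  rw [List.nil_append] at h
  rw [parse, List.foldl_append, h, foldl_step_replicate, zero_add]

lemma parse_eq_reading_iff {w : List Bool} {l : List ℕ} {r : ℕ} :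
    parse w = reading l r ↔ w = encode l ++ List.replicate r true := by
  constructor
  · induction w using List.reverseRecOn generalizing l r with
    | nil => intro h; cases h; rfl
    | append_singleton w b ih =>
      rw [parse_append_singleton]
      rcases hw : parse w with ⟨l', r'⟩ | p
      · rw [ih hw]
        cases b
        · simp only [step]
          split_ifs with hr
          · intro h; cases h
          · rintro ⟨⟩
            rw [encode_append_singleton, show 2 * (r' / 2 - 1 + 1) = r' by omega]
            simp
        · rintro ⟨⟩
          simp [List.replicate_succ']
      · intro h; cases h
  · rintro rfl
    exact parse_encode_append_replicate l r

lemma parse_eq_fault_iff {w : List Bool} {p : ℕ} :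
    parse w = fault p ↔ ∃ (l : List ℕ) (r : ℕ) (u : List Bool), (r % 2 = 1 ∨ r = 0) ∧
      (l.length + r) % 2 = p ∧ w = encode l ++ List.replicate r true ++ false :: u := by
  constructor
  · induction w using List.reverseRecOn with
    | nil => intro h; cases h
    | append_singleton w b ih =>
      rw [parse_append_singleton]
      rcases hw : parse w with ⟨l, r⟩ | q
      · rw [parse_eq_reading_iff.1 hw]
        cases b
        · simp only [step]
          split_ifs with hr
          · rintro ⟨⟩
            exact ⟨l, r, [], hr, rfl, by simp⟩
          · intro h; cases h
        · intro h; cases h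
      · intro h; cases h
        obtain ⟨l, r, u, hr, hp, rfl⟩ := ih hw
        exact ⟨l, r, u ++ [b], hr, hp, by simp⟩
  · rintro ⟨l, r, u, hr, rfl, rfl⟩
    rw [parse, List.foldl_append, List.foldl_cons, ← parse, parse_encode_append_replicate]
    simp [step, hr, foldl_step_fault]

lemma parse_eq_fault_of_prefix {w w' : List Bool} {p : ℕ} (h : parse w = fault p)
    (hw : w <+: w') : parse w' = fault p := by
  obtain ⟨v, rfl⟩ := hw
  rw [parse, List.foldl_append, ← parse, h, foldl_step_fault]

lemma reading_prefix_of_prefix {w w' : List Bool} {l l' : List ℕ} {r r' : ℕ}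
    (h : parse w = reading l r) (h' : parse w' = reading l' r') (hw : w <+: w') :
    l <+: l' := by
  obtain ⟨v, rfl⟩ := hw
  induction v using List.reverseRecOn generalizing l' r' with
  | nil => simp_all
  | append_singleton v b ih =>
    rw [← List.append_assoc, parse_append_singleton] at h'
    rcases hv : parse (w ++ v) with ⟨l'', r''⟩ | q
    · rw [hv] at h'
      refine (ih hv).trans ?_
      cases b
      · simp only [step] at h'
        split_ifs at h'
        cases h'; exact List.prefix_append _ _
      · cases h'; exact List.prefix_refl _
    · rw [hv] at h'; cases h'

lemma parse_histOf_eq_fault_of_le {y : ℕ → Bool} {n n' : ℕ} {p : ℕ}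
    (h : parse (histOf y n) = fault p) (hn : n ≤ n') : parse (histOf y n') = fault p :=
  parse_eq_fault_of_prefix h (histOf_prefix y hn)

lemma getElem_eq_of_parse_histOf {y : ℕ → Bool} {n n' : ℕ} {l l' : List ℕ} {r r' j : ℕ}
    (h : parse (histOf y n) = reading l r) (h' : parse (histOf y n') = reading l' r')
    (hj : j < l.length) (hj' : j < l'.length) : l[j] = l'[j] := by
  rcases le_total n n' with hn | hn
  · exact (reading_prefix_of_prefix h h' (histOf_prefix y hn)).getElem hj
  · exact ((reading_prefix_of_prefix h' h (histOf_prefix y hn)).getElem hj').symm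

lemma blame_parse_lt_two (w : List Bool) : (parse w).blame < 2 := by
  rcases hw : parse w with ⟨l, r⟩ | p
  · exact Nat.mod_lt _ two_pos
  · obtain ⟨l, r, u, -, rfl, -⟩ := parse_eq_fault_iff.1 hw
    exact Nat.mod_lt _ two_pos

lemma encode_prefix {l l' : List ℕ} (h : l <+: l') : encode l <+: encode l' := by
  obtain ⟨v, rfl⟩ := h
  simp [encode]

lemma cumCat_eq_encode (x : ℕ → ℕ) (m : ℕ) :
    cumCat (fun n => goodBlock (x n + 1)) m = encode (histOf x m) := by
  induction m with
  | zero => rfl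
  | succ m ih => simp [cumCat, ih, histOf_succ, encode]

lemma histOf_phiCode (x : ℕ → ℕ) (m : ℕ) :
    histOf (phiCode x) (encode (histOf x m)).length = encode (histOf x m) := by
  refine List.ext_getElem (by simp) fun i _ hi => ?_
  have hi' : i < (encode (histOf x (i + 1))).length :=
    (length_le_encode_length _).trans_lt' (by simp)
  have hpre {k} (hk : k ≤ max m (i + 1)) :=
    encode_prefix (histOf_prefix x hk)
  simp only [getElem_histOf, phiCode, infCat, cumCat_eq_encode, List.getD_eq_getElem _ _ hi',
    (hpre (le_max_right _ _)).getElem hi', (hpre (le_max_left _ _)).getElem hi]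

lemma parse_histOf_phiCode (x : ℕ → ℕ) (m : ℕ) :
    parse (histOf (phiCode x) (encode (histOf x m)).length) = reading (histOf x m) 0 := by
  rw [histOf_phiCode, parse_eq_reading_iff, List.replicate_zero, List.append_nil]

lemma phiCode_injective : Function.Injective phiCode := by
  intro x x' h
  funext j
  have h₁ := parse_histOf_phiCode x (j + 1)
  have h₂ := parse_histOf_phiCode x' (j + 1)
  rw [← h] at h₂
  simpa using getElem_eq_of_parse_histOf (j := j) h₁ h₂ (by simp) (by simp)

/-- Player `p` is to blame for `y` not being a code word: `p` misplaces a `0`, or `p` never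
closes the block it owns (block `k` is closed by player `k % 2`). -/
def LostBy (p : ℕ) (y : ℕ → Bool) : Prop :=
  (∃ n, parse (histOf y n) = fault p) ∨
    ∃ l : List ℕ, l.length % 2 = p ∧ y = padOnes (encode l)

lemma LostBy.eventually_blame {p : ℕ} {y : ℕ → Bool} (h : LostBy p y) :
    ∃ N, ∀ n ≥ N, (parse (histOf y n)).blame = p := by
  rcases h with ⟨N, hN⟩ | ⟨l, hl, rfl⟩
  · exact ⟨N, fun n hn => by rw [parse_histOf_eq_fault_of_le hN hn]; rfl⟩
  · refine ⟨(encode l).length, fun n hn => ?_⟩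
    obtain ⟨t, rfl⟩ := Nat.exists_eq_add_of_le hn
    rw [histOf_padOnes, parse_encode_append_replicate]
    exact hl

lemma LostBy.unique {p q : ℕ} {y : ℕ → Bool} (hp : LostBy p y) (hq : LostBy q y) :
    p = q := by
  obtain ⟨N, hN⟩ := hp.eventually_blame
  obtain ⟨N', hN'⟩ := hq.eventually_blame
  rw [← hN (max N N') (le_max_left _ _), hN' _ (le_max_right _ _)]

lemma LostBy.lt_two {p : ℕ} {y : ℕ → Bool} (h : LostBy p y) : p < 2 := by
  obtain ⟨N, hN⟩ := h.eventually_blame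
  exact hN N le_rfl ▸ blame_parse_lt_two _

lemma not_lostBy_phiCode (p : ℕ) (x : ℕ → ℕ) : ¬ LostBy p (phiCode x) := by
  intro h
  obtain ⟨N, hN⟩ := h.eventually_blame
  have hblame : ∀ m ≥ N, m % 2 = p := fun m hm => by
    have := hN _ ((length_le_encode_length (histOf x m)).trans' (by simpa using hm))
    rwa [parse_histOf_phiCode, blame, histOf_length] at this
  have := hblame N le_rfl
  have := hblame (N + 1) (by omega)
  omega

lemma exists_parse_histOf_eq_fault_iff {y : ℕ → Bool} {p : ℕ} :
    (∃ n, parse (histOf y n) = fault p) ↔ ∃ (l : List ℕ) (r : ℕ), (r % 2 = 1 ∨ r = 0) ∧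
      (l.length + r) % 2 = p ∧
        listPrefixOf (encode l ++ List.replicate r true ++ [false]) y := by
  simp only [listPrefixOf_iff]
  constructor
  · rintro ⟨n, hn⟩
    obtain ⟨l, r, u, hr, hp, hw⟩ := parse_eq_fault_iff.1 hn
    refine ⟨l, r, hr, hp, ?_⟩
    rw [show encode l ++ List.replicate r true ++ false :: u =
      (encode l ++ List.replicate r true ++ [false]) ++ u by simp] at hw
    exact histOf_length_eq_of_eq_append hw
  · rintro ⟨l, r, hr, hp, hy⟩
    exact ⟨_, hy ▸ parse_eq_fault_iff.2 ⟨l, r, [], hr, hp, rfl⟩⟩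

lemma mem_Dtwo_or_mem_Dfour_iff {y : ℕ → Bool} :
    y ∈ Dtwo ∨ y ∈ Dfour ↔ ∃ n, parse (histOf y n) = fault 1 := by
  rw [exists_parse_histOf_eq_fault_iff]
  constructor
  · rintro (⟨n, k, w, hw, hy⟩ | ⟨n, w, hw, hy⟩) <;>
      obtain ⟨l, hl, rfl⟩ := isBlocksCat_iff.1 hw
    · exact ⟨l, 2 * k + 1, by omega, by omega, hy⟩
    · exact ⟨l, 0, by omega, by omega, by simpa using hy⟩
  · rintro ⟨l, r, hr | rfl, hp, hy⟩
    · left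
      refine ⟨l.length / 2, r / 2, encode l, isBlocksCat_iff.2 ⟨l, by omega, rfl⟩, ?_⟩
      rwa [show 2 * (r / 2) + 1 = r by omega]
    · right
      exact ⟨l.length / 2, encode l, isBlocksCat_iff.2 ⟨l, by omega, rfl⟩, by simpa using hy⟩

lemma mem_Dthree_iff {y : ℕ → Bool} :
    y ∈ Dthree ↔ ∃ l : List ℕ, l.length % 2 = 1 ∧ y = padOnes (encode l) := by
  constructor
  · rintro ⟨n, w, hw, hy⟩
    obtain ⟨l, hl, rfl⟩ := isBlocksCat_iff.1 hw
    exact ⟨l, by omega, eq_padOnes_iff.2 hy⟩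
  · rintro ⟨l, hl, hy⟩
    exact ⟨l.length / 2, encode l, isBlocksCat_iff.2 ⟨l, by omega, rfl⟩, eq_padOnes_iff.1 hy⟩

def codedSet (L : Set (ℕ → ℕ)) : Set (ℕ → Bool) := phiCode '' L ∪ Dtwo ∪ Dthree ∪ Dfour

lemma mem_codedSet_iff {L : Set (ℕ → ℕ)} {y : ℕ → Bool} :
    y ∈ codedSet L ↔ y ∈ phiCode '' L ∨ LostBy 1 y := by
  simp only [codedSet, Set.mem_union, LostBy, ← mem_Dtwo_or_mem_Dfour_iff, ← mem_Dthree_iff]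
  tauto

lemma mem_codedSet_of_lostBy {L : Set (ℕ → ℕ)} {p : ℕ} {y : ℕ → Bool} (h : LostBy p y) :
    y ∈ codedSet L ↔ p = 1 := by
  rw [mem_codedSet_iff]
  constructor
  · rintro (⟨x, -, rfl⟩ | h₁)
    · exact absurd h (not_lostBy_phiCode p x)
    · exact h.unique h₁
  · rintro rfl
    exact Or.inr h

lemma phiCode_mem_codedSet {L : Set (ℕ → ℕ)} {x : ℕ → ℕ} :
    phiCode x ∈ codedSet L ↔ x ∈ L := by
  simp [mem_codedSet_iff, phiCode_injective.mem_set_image, not_lostBy_phiCode]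

lemma exists_eq_phiCode {y : ℕ → Bool} (hread : ∀ n, ∃ l r, parse (histOf y n) = reading l r)
    (hzero : ∀ N, ∃ i ≥ N, y i = false) : ∃ x, phiCode x = y := by
  have hgrow : ∀ j, ∃ n l, parse (histOf y n) = reading l 0 ∧ j ≤ l.length := by
    intro j
    induction j with
    | zero => exact ⟨0, [], rfl, le_rfl⟩
    | succ j ih =>
      obtain ⟨n, l, hn, hj⟩ := ih
      obtain ⟨i, hi, hyi⟩ := hzero n
      obtain ⟨l', r', hi'⟩ := hread i
      obtain ⟨l'', r'', hi''⟩ := hread (i + 1)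
      have hstep := hi''
      rw [histOf_succ, parse_append_singleton, hi', hyi, step] at hstep
      split_ifs at hstep
      cases hstep
      have := (reading_prefix_of_prefix hn hi' (histOf_prefix y hi)).length_le
      exact ⟨i + 1, _, hi'', by simp; omega⟩
  choose N l hN hlen using hgrow
  let x j := (l (j + 1))[j]'(hlen (j + 1))
  have hl (k : ℕ) : l k = histOf x (l k).length :=
    List.ext_getElem (by simp) fun j h₁ h₂ =>
      (getElem_eq_of_parse_histOf (hN k) (hN (j + 1)) h₁ (hlen (j + 1))).trans (by simp [x])
  refine ⟨x, funext fun i => ?_⟩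
  have hy : histOf y (N (i + 1)) = encode (l (i + 1)) := by
    simpa using parse_eq_reading_iff.1 (hN (i + 1))
  have hφ := histOf_phiCode x (l (i + 1)).length
  rw [← hl] at hφ
  have hN' : N (i + 1) = (encode (l (i + 1))).length := by simpa using congrArg List.length hy
  refine apply_eq_of_histOf_eq (n := N (i + 1)) (by rw [hy, hN', hφ]) ?_
  have := length_le_encode_length (l (i + 1))
  have := hlen (i + 1)
  omega

lemma exists_lostBy_or_mem_range (y : ℕ → Bool) : (∃ p, LostBy p y) ∨ y ∈ Set.range phiCode := by
  by_cases hfault : ∃ n p, parse (histOf y n) = fault p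
  · obtain ⟨n, p, h⟩ := hfault
    exact Or.inl ⟨p, Or.inl ⟨n, h⟩⟩
  have hread (n : ℕ) : ∃ l r, parse (histOf y n) = reading l r := by
    rcases h : parse (histOf y n) with ⟨l, r⟩ | p
    · exact ⟨l, r, rfl⟩
    · exact absurd ⟨n, p, h⟩ hfault
  by_cases hones : ∃ N, ∀ i ≥ N, y i = true
  · obtain ⟨N, hN⟩ := hones
    obtain ⟨l, r, h⟩ := hread N
    have hy := parse_eq_reading_iff.1 h
    refine Or.inl ⟨l.length % 2, Or.inr ⟨l, rfl, eq_padOnes_iff.2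
      ⟨listPrefixOf_iff.2 (histOf_length_eq_of_eq_append hy), fun i hi => ?_⟩⟩⟩
    rcases Nat.lt_or_ge i N with hiN | hiN
    · have := congrArg (·[i]?) hy
      simp only [getElem?_histOf, hiN, List.getElem?_append_right hi,
        List.getElem?_replicate] at this
      simp_all
    · exact hN i hiN
  · push Not at hones
    simp only [ne_eq, Bool.not_eq_true] at hones
    exact Or.inr (exists_eq_phiCode hread hones)

def codeStrategy (p : ℕ) (s : List ℕ → ℕ) (w : List Bool) : Bool :=
  match parse w with
  | reading l r => !(l.length % 2 == p && r == 2 * s l + 2)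
  | fault _ => true

section CodeStrategy

variable {p : ℕ} {s : List ℕ → ℕ} {y : ℕ → Bool}

lemma codeStrategy_eq_false {l : List ℕ} {r : ℕ}
    (h : codeStrategy p s (encode l ++ List.replicate r true) = false) :
    l.length % 2 = p ∧ r = 2 * s l + 2 := by
  simpa [codeStrategy, parse_encode_append_replicate] using h

lemma Follows.eq_codeStrategy (hy : Follows p (codeStrategy p s) y) {n : ℕ} {l : List ℕ}
    {r : ℕ} {b : Bool} {u : List Bool}
    (h : histOf y n = encode l ++ List.replicate r true ++ b :: u)
    (hp : (l.length + r) % 2 = p) :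
    b = codeStrategy p s (encode l ++ List.replicate r true) := by
  have hpos : (encode l ++ List.replicate r true).length % 2 = p := by
    simp [← hp, Nat.add_mod, encode_length_mod_two]
  rw [← apply_length_eq_of_histOf_eq h, hy _ hpos, histOf_length_eq_of_eq_append h]

lemma Follows.not_lostBy_codeStrategy (hy : Follows p (codeStrategy p s) y) :
    ¬ LostBy p y := by
  rintro (⟨n, hn⟩ | ⟨l, hl, rfl⟩)
  · obtain ⟨l, r, u, hr, hp, hw⟩ := parse_eq_fault_iff.1 hn
    have := codeStrategy_eq_false (hy.eq_codeStrategy hw hp).symm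
    omega
  · have hw : histOf (padOnes (encode l)) ((encode l).length + (2 * s l + 3)) =
        encode l ++ List.replicate (2 * s l + 2) true ++ [true] := by
      rw [histOf_padOnes, List.replicate_succ', List.append_assoc]
    have := hy.eq_codeStrategy hw (by omega)
    simp [codeStrategy, parse_encode_append_replicate, hl] at this

lemma Follows.of_codeStrategy_phiCode {x : ℕ → ℕ}
    (h : Follows p (codeStrategy p s) (phiCode x)) : Follows p s x := by
  intro m hm
  have hw := histOf_phiCode x (m + 1)
  rw [histOf_succ, encode_append_singleton] at hw
  have := codeStrategy_eq_false (h.eq_codeStrategy hw (by simp [hm])).symm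
  simp only [histOf_length] at this
  omega

end CodeStrategy

theorem Wins.codeStrategy_codedSet {p : ℕ} (hp : p < 2) {L : Set (ℕ → ℕ)} {s : List ℕ → ℕ}
    (hs : Wins p L s) : Wins p (codedSet L) (codeStrategy p s) := by
  intro y hy
  rcases exists_lostBy_or_mem_range y with ⟨q, hq⟩ | ⟨x, rfl⟩
  · have hqp : q ≠ p := fun h => hy.not_lostBy_codeStrategy (h ▸ hq)
    have := hq.lt_two
    rw [mem_codedSet_of_lostBy hq]
    omega
  · rw [phiCode_mem_codedSet]
    exact hs x hy.of_codeStrategy_phiCode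

def WritesZeroAt (p : ℕ) (s : List Bool → Bool) (h : List ℕ) (t : ℕ) : Prop :=
  (h.length + t) % 2 = p ∧ s (encode h ++ List.replicate t true) = false

/-- Player `p` answers `h` with the integer coded by the block that `s` writes after
`encode h` against an opponent who only writes ones; the value is junk when that block is
malformed. -/
noncomputable def decodeStrategy (p : ℕ) (s : List Bool → Bool) (h : List ℕ) : ℕ :=
  open Classical in
  if hz : ∃ t, WritesZeroAt p s h t then Nat.find hz / 2 - 1 else 0

section DecodeStrategy

variable {p : ℕ} {s : List Bool → Bool} {h : List ℕ}

lemma exists_decodeStrategy_eq (hz : ∃ t, WritesZeroAt p s h t) :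
    ∃ T, WritesZeroAt p s h T ∧ (∀ k < T, ¬ WritesZeroAt p s h k) ∧
      decodeStrategy p s h = T / 2 - 1 := by
  classical
  rw [decodeStrategy, dif_pos hz]
  exact ⟨_, Nat.find_spec hz, fun k => Nat.find_min hz, rfl⟩

lemma consistent_encode_append_replicate_iff (hw : Consistent p s (encode h)) {t : ℕ} :
    Consistent p s (encode h ++ List.replicate t true) ↔ ∀ k < t, ¬ WritesZeroAt p s h k := by
  rw [consistent_append_replicate]
  refine and_iff_right_of_imp (fun _ => hw) |>.trans (forall₂_congr fun k _ => ?_)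
  have := encode_length_mod_two h
  rw [WritesZeroAt, show (h.length + k) % 2 = ((encode h).length + k) % 2 by omega]
  cases s (encode h ++ List.replicate k true) <;> simp

lemma follows_padOnes (hw : Consistent p s (encode h)) (hz : ∀ t, ¬ WritesZeroAt p s h t) :
    Follows p s (padOnes (encode h)) :=
  Follows.of_consistent fun n => ⟨(encode h).length + n, by omega, by
    rw [histOf_padOnes, consistent_encode_append_replicate_iff hw]
    exact fun k _ => hz k⟩

lemma Consistent.encode_append_or_exists_lostBy {a : ℕ} (hw : Consistent p s (encode h))
    (ha : h.length % 2 = p → a = decodeStrategy p s h) :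
    Consistent p s (encode (h ++ [a])) ∨ ∃ y, Follows p s y ∧ LostBy p y := by
  rw [encode_append_singleton, consistent_append_singleton,
    consistent_encode_append_replicate_iff hw]
  by_cases hz : ∃ t, WritesZeroAt p s h t
  · obtain ⟨T, ⟨hTp, hTs⟩, hmin, hdec⟩ := exists_decodeStrategy_eq hz
    by_cases hbad : T % 2 = 1 ∨ T = 0
    · have hu : Consistent p s (encode h ++ List.replicate T true ++ [false]) :=
        consistent_append_singleton.2
          ⟨(consistent_encode_append_replicate_iff hw).2 hmin, fun _ => hTs.symm⟩
      obtain ⟨y, hy, hfol⟩ := hu.exists_follows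
      exact Or.inr ⟨y, hfol, Or.inl ⟨_, hy ▸ parse_eq_fault_iff.2 ⟨h, T, [], hbad, hTp, rfl⟩⟩⟩
    · have : 2 * (a + 1) = T := by rw [ha (by omega), hdec]; omega
      exact Or.inl (this ▸ ⟨hmin, fun _ => hTs.symm⟩)
  · push Not at hz
    by_cases hh : h.length % 2 = p
    · exact Or.inr ⟨_, follows_padOnes hw hz, Or.inr ⟨h, hh, rfl⟩⟩
    · refine Or.inl ⟨fun k _ => hz k, fun hpar => absurd ?_ hh⟩
      have := encode_length_mod_two h
      simp at hpar
      omega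

lemma Follows.phiCode_or_exists_lostBy_of_decodeStrategy {x : ℕ → ℕ}
    (hx : Follows p (decodeStrategy p s) x) :
    Follows p s (phiCode x) ∨ ∃ y, Follows p s y ∧ LostBy p y := by
  refine or_iff_not_imp_right.2 fun hlost => ?_
  have hcons (m : ℕ) : Consistent p s (encode (histOf x m)) := by
    induction m with
    | zero => simp [histOf, Consistent]
    | succ m ih =>
      rw [histOf_succ]
      exact (ih.encode_append_or_exists_lostBy fun hm => hx m (by simpa using hm)).resolve_right
        hlost
  exact Follows.of_consistent fun n => ⟨_, (length_le_encode_length _).trans' (by simp),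
    (histOf_phiCode x n).symm ▸ hcons n⟩

end DecodeStrategy

theorem Wins.decodeStrategy_of_codedSet {p : ℕ} {L : Set (ℕ → ℕ)} {s : List Bool → Bool}
    (hs : Wins p (codedSet L) s) : Wins p L (decodeStrategy p s) := by
  intro x hx
  rcases hx.phiCode_or_exists_lostBy_of_decodeStrategy with hφ | ⟨y, hy, hlost⟩
  · rw [← phiCode_mem_codedSet]
    exact hs _ hφ
  · have := hs y hy
    rw [mem_codedSet_of_lostBy hlost] at this
    have := hlost.lt_two
    omega

/-- For `L ⊆ ω^ω` and `L' = φ(L) ∪ D₂ ∪ D₃ ∪ D₄ ⊆ {0,1}^ω`: Player 1 has a winning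
strategy in the Gale-Stewart game `G L` over alphabet `ω` iff Player 1 has one in
`G L'` over alphabet `{0,1}`, and similarly for Player 2; in particular `G L` is
determined iff `G L'` is determined. -/
theorem coded_game_equivalence (L : Set (ℕ → ℕ)) :
    ((∃ σ, P1Winning L σ) ↔
      ∃ σ', P1Winning (phiCode '' L ∪ Dtwo ∪ Dthree ∪ Dfour) σ') ∧
    ((∃ τ, P2Winning L τ) ↔
      ∃ τ', P2Winning (phiCode '' L ∪ Dtwo ∪ Dthree ∪ Dfour) τ') ∧
    (GSDetermined L ↔ GSDetermined (phiCode '' L ∪ Dtwo ∪ Dthree ∪ Dfour)) := by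
  have transfer (p : ℕ) (hp : p < 2) : (∃ s, Wins p L s) ↔ ∃ s', Wins p (codedSet L) s' :=
    ⟨fun ⟨_, hs⟩ => ⟨_, hs.codeStrategy_codedSet hp⟩,
      fun ⟨_, hs⟩ => ⟨_, hs.decodeStrategy_of_codedSet⟩⟩
  have h₁ := transfer 0 two_pos
  have h₂ := transfer 1 one_lt_two
  simp only [← p1Winning_iff_wins_zero, ← p2Winning_iff_wins_one] at h₁ h₂
  exact ⟨h₁, h₂, or_congr h₁ h₂⟩
end
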